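/- arXiv:0909.2126 — 4 statements merged into one kernel-verified Lean document; each statement's English description precedes it below -/
import Mathlib

section
/- Let μ0 be a mean-zero Gaussian measure on a separable Banach space with μ0(X) = 1 for a Banach space X, and define probability measures μ and μ^N by dμ/dμ0(u) = Z^{-1} exp(−Φ(u)) and dμ^N/dμ0(u) = (Z^N)^{-1} exp(−Φ^N(u)), where Z = ∫_X exp(−Φ(u)) dμ0(u) and Z^N = ∫_X exp(−Φ^N(u)) dμ0(u). Assume Φ and Φ^N satisfy, with constants uniform in N: (i) for every ε > 0 there is M = M(ε) ∈ R such that Φ(u) ≥ M − ε‖u‖_X² for all u ∈ X (and the same for Φ^N); (ii) for every r > 0 there is L(r) > 0 such that Φ(u) ≤ L(r) for all u with ‖u‖_X < r (and the same for Φ^N). Assume also that for any ε > 0 there is K = K(ε) > 0 such that |Φ(u) − Φ^N(u)| ≤ K exp(ε‖u‖_X²) ψ(N) for all u ∈ X, where ψ(N) → 0 as N → ∞. Then there is a constant C, independent of N, such that d_Hell(μ, μ^N) ≤ C ψ(N). -/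
/-!
With `Z, Z_N` the normalising constants, splitting
`Z^{-1/2} e^{-Φ/2} - Z_N^{-1/2} e^{-Φ_N/2}` as
`Z^{-1/2} (e^{-Φ/2} - e^{-Φ_N/2}) + (Z^{-1/2} - Z_N^{-1/2}) e^{-Φ_N/2}` gives
`2 d_Hell² ≤ (2 / Z) ∫ (e^{-Φ/2} - e^{-Φ_N/2})² + 2 (Z^{-1/2} - Z_N^{-1/2})² Z_N`.
The upper bound on `Φ, Φ_N` near `0` and the positive mass of small balls bound `Z, Z_N` from
below uniformly in `N`, and `Z^{-1/2}` is Lipschitz there. Since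
`|e^{-x} - e^{-y}| ≤ e^{-c} |x - y|` for `x, y ≥ c`, the lower bound on `Φ, Φ_N` together with
the approximation estimate makes every pointwise error `O(ψ(N) e^{a ‖u‖²})`, which is integrable
by Fernique; hence both terms are `O(ψ(N)²)`.
-/

open MeasureTheory Real Filter Topology

/-- The Hellinger distance between the measures with densities `p` and `q` with
respect to the reference measure `ν`. -/
noncomputable def hellinger {X : Type*} [MeasurableSpace X] (ν : Measure X)
    (p q : X → ℝ) : ℝ :=
  Real.sqrt ((1 / 2) * ∫ u, (Real.sqrt (p u) - Real.sqrt (q u)) ^ 2 ∂ν)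

lemma abs_exp_neg_sub_exp_neg_le {x y c : ℝ} (hx : c ≤ x) (hy : c ≤ y) :
    |exp (-x) - exp (-y)| ≤ exp (-c) * |x - y| := by
  wlog hxy : x ≤ y generalizing x y
  · rw [abs_sub_comm, abs_sub_comm x]
    exact this hy hx (le_of_not_ge hxy)
  have hexp : exp (-y) ≤ exp (-x) := exp_le_exp.mpr (neg_le_neg hxy)
  rw [abs_of_nonneg (sub_nonneg.mpr hexp), abs_of_nonpos (sub_nonpos.mpr hxy), neg_sub]
  calc exp (-x) - exp (-y) = exp (-x) * (1 - exp (-(y - x))) := by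
        rw [mul_sub, mul_one, ← exp_add]; ring_nf
    _ ≤ exp (-c) * (y - x) :=
        mul_le_mul (exp_le_exp.mpr (neg_le_neg hx)) (by linarith [add_one_le_exp (-(y - x))])
          (sub_nonneg.mpr (exp_le_one_iff.mpr (by linarith))) (exp_pos _).le

lemma sq_inv_sqrt_sub_inv_sqrt_le {Z Z' b : ℝ} (hb : 0 < b) (hZ : b ≤ Z) (hZ' : b ≤ Z') :
    (√Z⁻¹ - √Z'⁻¹) ^ 2 ≤ (Z - Z') ^ 2 / (4 * b ^ 3) := by
  have hZ0 : 0 < Z := hb.trans_le hZ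
  have hZ'0 : 0 < Z' := hb.trans_le hZ'
  have key : (√Z⁻¹ - √Z'⁻¹) ^ 2 = (Z - Z') ^ 2 / (Z * Z' * (√Z + √Z') ^ 2) := by
    rw [sqrt_inv, sqrt_inv]
    set s := √Z
    set s' := √Z'
    have hs : 0 < s := sqrt_pos.mpr hZ0
    have hs' : 0 < s' := sqrt_pos.mpr hZ'0
    rw [← sq_sqrt hZ0.le, ← sq_sqrt hZ'0.le]
    field_simp
    ring
  rw [key]
  have hsb : 2 * √b ≤ √Z + √Z' := by linarith [sqrt_le_sqrt hZ, sqrt_le_sqrt hZ']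
  calc (Z - Z') ^ 2 / (Z * Z' * (√Z + √Z') ^ 2) ≤ (Z - Z') ^ 2 / (b * b * (2 * √b) ^ 2) := by
        gcongr
    _ = (Z - Z') ^ 2 / (4 * b ^ 3) := by
        rw [mul_pow, sq_sqrt hb.le]; ring_nf

section Hellinger

variable {X : Type*} [MeasurableSpace X] {ν : Measure X} {p q : X → ℝ}

lemma hellinger_le_of_integral_le {B δ : ℝ} (hδ : 0 ≤ δ)
    (h : ∫ u, (√(p u) - √(q u)) ^ 2 ∂ν ≤ B * δ ^ 2) : hellinger ν p q ≤ √(B / 2) * δ := by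
  rw [hellinger, ← sqrt_sq hδ, ← sqrt_mul' _ (sq_nonneg δ)]
  exact sqrt_le_sqrt (by linarith)

lemma integrable_sq_sqrt_sub_sqrt (hp : Integrable p ν) (hq : Integrable q ν) (hp0 : 0 ≤ p)
    (hq0 : 0 ≤ q) : Integrable (fun u => (√(p u) - √(q u)) ^ 2) ν := by
  refine (hp.add hq).mono' ?_ (ae_of_all _ fun u => ?_)
  · exact ((continuous_sqrt.comp_aestronglyMeasurable hp.1).sub
      (continuous_sqrt.comp_aestronglyMeasurable hq.1)).pow 2
  · rw [Real.norm_eq_abs, abs_of_nonneg (sq_nonneg _), Pi.add_apply]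
    nlinarith [sq_sqrt (hp0 u), sq_sqrt (hq0 u), sqrt_nonneg (p u), sqrt_nonneg (q u)]

lemma integral_sq_sqrt_normalized_sub_le (hp : Integrable p ν) (hq : Integrable q ν)
    (hp0 : 0 ≤ p) (hq0 : 0 ≤ q) {b : ℝ} (hb : 0 < b) (hbp : b ≤ ∫ u, p u ∂ν)
    (hbq : b ≤ ∫ u, q u ∂ν) :
    ∫ u, (√((∫ u', p u' ∂ν)⁻¹ * p u) - √((∫ u', q u' ∂ν)⁻¹ * q u)) ^ 2 ∂ν
      ≤ 2 / b * ∫ u, (√(p u) - √(q u)) ^ 2 ∂ν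
        + (∫ u, p u ∂ν - ∫ u, q u ∂ν) ^ 2 * (∫ u, q u ∂ν) / (2 * b ^ 3) := by
  set Zp := ∫ u, p u ∂ν
  set Zq := ∫ u, q u ∂ν
  set I := ∫ u, (√(p u) - √(q u)) ^ 2 ∂ν
  have hpq := integrable_sq_sqrt_sub_sqrt hp hq hp0 hq0
  have hpt : ∀ u, (√(Zp⁻¹ * p u) - √(Zq⁻¹ * q u)) ^ 2
      ≤ 2 * √Zp⁻¹ ^ 2 * (√(p u) - √(q u)) ^ 2 + 2 * (√Zp⁻¹ - √Zq⁻¹) ^ 2 * q u := by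
    intro u
    rw [sqrt_mul (inv_nonneg.mpr (hb.trans_le hbp).le),
      sqrt_mul (inv_nonneg.mpr (hb.trans_le hbq).le)]
    calc _ = (√Zp⁻¹ * (√(p u) - √(q u)) + (√Zp⁻¹ - √Zq⁻¹) * √(q u)) ^ 2 := by ring
      _ ≤ 2 * ((√Zp⁻¹ * (√(p u) - √(q u))) ^ 2 + ((√Zp⁻¹ - √Zq⁻¹) * √(q u)) ^ 2) := add_sq_le
      _ = _ := by rw [mul_pow _ √(q u), sq_sqrt (hq0 u)]; ring
  have hI : 0 ≤ I := integral_nonneg fun u => sq_nonneg _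
  calc ∫ u, (√(Zp⁻¹ * p u) - √(Zq⁻¹ * q u)) ^ 2 ∂ν
      ≤ ∫ u, (2 * √Zp⁻¹ ^ 2 * (√(p u) - √(q u)) ^ 2 + 2 * (√Zp⁻¹ - √Zq⁻¹) ^ 2 * q u) ∂ν :=
        integral_mono_of_nonneg (ae_of_all _ fun _ => sq_nonneg _)
          ((hpq.const_mul _).add (hq.const_mul _)) (ae_of_all _ hpt)
    _ = 2 * Zp⁻¹ * I + 2 * (√Zp⁻¹ - √Zq⁻¹) ^ 2 * Zq := by
        rw [integral_add (hpq.const_mul _) (hq.const_mul _), integral_const_mul,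
          integral_const_mul, sq_sqrt (inv_nonneg.mpr (hb.trans_le hbp).le)]
    _ ≤ 2 * b⁻¹ * I + 2 * ((Zp - Zq) ^ 2 / (4 * b ^ 3)) * Zq := by
        gcongr
        · exact hb.trans_le hbq |>.le
        · exact sq_inv_sqrt_sub_inv_sqrt_le hb hbp hbq
    _ = 2 / b * I + (Zp - Zq) ^ 2 * Zq / (2 * b ^ 3) := by ring

end Hellinger

section ExpBounds

variable {a ε M K δ t x y : ℝ}

lemma exp_neg_le_of_sub_mul_le (hεa : ε ≤ a) (ht : 0 ≤ t) (hx : M - ε * t ≤ x) :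
    exp (-x) ≤ exp (-M) * exp (a * t) := by
  rw [← exp_add]
  exact exp_le_exp.mpr (by nlinarith)

lemma abs_exp_neg_sub_exp_neg_le_of_sub_mul_le (hεa : 2 * ε ≤ a) (ht : 0 ≤ t)
    (hx : M - ε * t ≤ x) (hy : M - ε * t ≤ y) (hxy : |x - y| ≤ K * exp (ε * t) * δ) :
    |exp (-x) - exp (-y)| ≤ K * exp (-M) * δ * exp (a * t) := by
  have hKδ : 0 ≤ K * δ := by nlinarith [(abs_nonneg _).trans hxy, exp_pos (ε * t)]
  have hexp : exp (-(M - ε * t)) * exp (ε * t) = exp (-M) * exp (2 * ε * t) := by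
    rw [← exp_add, ← exp_add]; ring_nf
  calc |exp (-x) - exp (-y)| ≤ exp (-(M - ε * t)) * |x - y| := abs_exp_neg_sub_exp_neg_le hx hy
    _ ≤ exp (-(M - ε * t)) * (K * exp (ε * t) * δ) := by gcongr
    _ = K * δ * exp (-M) * exp (2 * ε * t) := by linear_combination K * δ * hexp
    _ ≤ K * δ * exp (-M) * exp (a * t) := by gcongr
    _ = K * exp (-M) * δ * exp (a * t) := by ring

lemma sq_sqrt_exp_neg_sub_sqrt_exp_neg_le_of_sub_mul_le (hεa : 3 * ε ≤ a) (ht : 0 ≤ t)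
    (hx : M - ε * t ≤ x) (hy : M - ε * t ≤ y) (hxy : |x - y| ≤ K * exp (ε * t) * δ) :
    (√(exp (-x)) - √(exp (-y))) ^ 2 ≤ K ^ 2 / 4 * exp (-M) * δ ^ 2 * exp (a * t) := by
  have hhalf := abs_exp_neg_sub_exp_neg_le (x := x / 2) (y := y / 2) (c := (M - ε * t) / 2)
    (by linarith) (by linarith)
  have hsq : (x - y) ^ 2 ≤ (K * exp (ε * t) * δ) ^ 2 :=
    sq_le_sq' (abs_le.mp hxy).1 (abs_le.mp hxy).2
  have hexp : exp (-((M - ε * t) / 2)) ^ 2 * exp (ε * t) ^ 2 = exp (-M) * exp (3 * ε * t) := by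
    rw [← exp_nat_mul, ← exp_nat_mul, ← exp_add, ← exp_add]; ring_nf
  rw [← exp_half, ← exp_half, neg_div, neg_div, ← sq_abs]
  calc |exp (-(x / 2)) - exp (-(y / 2))| ^ 2
      ≤ (exp (-((M - ε * t) / 2)) * |x / 2 - y / 2|) ^ 2 := by gcongr
    _ = exp (-((M - ε * t) / 2)) ^ 2 * (x - y) ^ 2 / 4 := by rw [mul_pow, sq_abs]; ring
    _ ≤ exp (-((M - ε * t) / 2)) ^ 2 * (K * exp (ε * t) * δ) ^ 2 / 4 := by gcongr
    _ = K ^ 2 / 4 * exp (-M) * δ ^ 2 * exp (3 * ε * t) := by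
        linear_combination K ^ 2 * δ ^ 2 / 4 * hexp
    _ ≤ K ^ 2 / 4 * exp (-M) * δ ^ 2 * exp (a * t) := by gcongr

end ExpBounds

section WeightedIntegrals

variable {X : Type*} [NormedAddCommGroup X] [MeasurableSpace X] {μ : Measure X}
  {a ε M K δ : ℝ} {f g : X → ℝ}

lemma integrable_exp_neg_of_sub_mul_sq_norm_le
    (hw : Integrable (fun u => exp (a * ‖u‖ ^ 2)) μ) (hεa : ε ≤ a)
    (hf : AEStronglyMeasurable f μ) (hfM : ∀ u, M - ε * ‖u‖ ^ 2 ≤ f u) :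
    Integrable (fun u => exp (-f u)) μ :=
  (hw.const_mul (exp (-M))).mono' (continuous_exp.comp_aestronglyMeasurable hf.neg)
    (ae_of_all _ fun u => by
      rw [norm_of_nonneg (exp_pos _).le]
      exact exp_neg_le_of_sub_mul_le hεa (sq_nonneg _) (hfM u))

lemma integral_exp_neg_le_of_sub_mul_sq_norm_le
    (hw : Integrable (fun u => exp (a * ‖u‖ ^ 2)) μ) (hεa : ε ≤ a)
    (hfM : ∀ u, M - ε * ‖u‖ ^ 2 ≤ f u) :
    ∫ u, exp (-f u) ∂μ ≤ exp (-M) * ∫ u, exp (a * ‖u‖ ^ 2) ∂μ := by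
  rw [← integral_const_mul]
  exact integral_mono_of_nonneg (ae_of_all _ fun u => (exp_pos _).le) (hw.const_mul _)
    (ae_of_all _ fun u => exp_neg_le_of_sub_mul_le hεa (sq_nonneg _) (hfM u))

lemma abs_integral_exp_neg_sub_integral_exp_neg_le
    (hw : Integrable (fun u => exp (a * ‖u‖ ^ 2)) μ) (hεa : 2 * ε ≤ a)
    (hf : Integrable (fun u => exp (-f u)) μ) (hg : Integrable (fun u => exp (-g u)) μ)
    (hfM : ∀ u, M - ε * ‖u‖ ^ 2 ≤ f u) (hgM : ∀ u, M - ε * ‖u‖ ^ 2 ≤ g u)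
    (hfg : ∀ u, |f u - g u| ≤ K * exp (ε * ‖u‖ ^ 2) * δ) :
    |∫ u, exp (-f u) ∂μ - ∫ u, exp (-g u) ∂μ|
      ≤ K * exp (-M) * δ * ∫ u, exp (a * ‖u‖ ^ 2) ∂μ := by
  rw [← integral_sub hf hg, ← integral_const_mul, ← Real.norm_eq_abs]
  refine norm_integral_le_of_norm_le (hw.const_mul _) (ae_of_all _ fun u => ?_)
  rw [Real.norm_eq_abs]
  exact abs_exp_neg_sub_exp_neg_le_of_sub_mul_le hεa (sq_nonneg _) (hfM u) (hgM u) (hfg u)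

lemma integral_sq_sqrt_exp_neg_sub_sqrt_exp_neg_le
    (hw : Integrable (fun u => exp (a * ‖u‖ ^ 2)) μ) (hεa : 3 * ε ≤ a)
    (hfM : ∀ u, M - ε * ‖u‖ ^ 2 ≤ f u) (hgM : ∀ u, M - ε * ‖u‖ ^ 2 ≤ g u)
    (hfg : ∀ u, |f u - g u| ≤ K * exp (ε * ‖u‖ ^ 2) * δ) :
    ∫ u, (√(exp (-f u)) - √(exp (-g u))) ^ 2 ∂μ
      ≤ K ^ 2 / 4 * exp (-M) * δ ^ 2 * ∫ u, exp (a * ‖u‖ ^ 2) ∂μ := by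
  rw [← integral_const_mul]
  exact integral_mono_of_nonneg (ae_of_all _ fun u => sq_nonneg _) (hw.const_mul _)
    (ae_of_all _ fun u => sq_sqrt_exp_neg_sub_sqrt_exp_neg_le_of_sub_mul_le hεa (sq_nonneg _)
      (hfM u) (hgM u) (hfg u))

end WeightedIntegrals

lemma exp_neg_mul_measureReal_le_integral {X : Type*} [MeasurableSpace X] {μ : Measure X}
    [IsFiniteMeasure μ] {f : X → ℝ} {S : Set X} {L : ℝ}
    (hf : Integrable (fun u => exp (-f u)) μ) (hS : MeasurableSet S) (hfS : ∀ u ∈ S, f u ≤ L) :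
    exp (-L) * μ.real S ≤ ∫ u, exp (-f u) ∂μ :=
  (setIntegral_ge_of_const_le_real hS (measure_ne_top _ _)
    (fun u hu => exp_le_exp.mpr (neg_le_neg (hfS u hu))) hf.integrableOn).trans
    (setIntegral_le_integral hf (ae_of_all _ fun _ => (exp_pos _).le))

theorem stmt1_general
    {X : Type*} [NormedAddCommGroup X]
    [MeasurableSpace X] [BorelSpace X]
    (μ0 : Measure X) [IsProbabilityMeasure μ0]
    -- μ0 is a mean-zero Gaussian measure with μ0(X) = 1:
    (hFernique : ∃ a : ℝ, 0 < a ∧ Integrable (fun u => Real.exp (a * ‖u‖ ^ 2)) μ0)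
    (hball : ∀ r : ℝ, 0 < r → 0 < μ0 {u : X | ‖u‖ ≤ r})
    (Φ : X → ℝ) (ΦN : ℕ → X → ℝ)
    (hΦmeas : Measurable Φ) (hΦNmeas : ∀ N, Measurable (ΦN N))
    -- Assumption 2.1(i), with constants uniform in N
    (hlower : ∀ ε : ℝ, 0 < ε → ∃ M : ℝ, ∀ (N : ℕ) (u : X),
      M - ε * ‖u‖ ^ 2 ≤ Φ u ∧ M - ε * ‖u‖ ^ 2 ≤ ΦN N u)
    -- Assumption 2.1(ii), with constants uniform in N
    (hupper : ∀ r : ℝ, 0 < r → ∃ L : ℝ, 0 < L ∧ ∀ (N : ℕ) (u : X),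
      ‖u‖ < r → Φ u ≤ L ∧ ΦN N u ≤ L)
    (ψ : ℕ → ℝ)
    -- forward approximation estimate
    (happrox : ∀ ε : ℝ, 0 < ε → ∃ K : ℝ, 0 < K ∧ ∀ (N : ℕ) (u : X),
      |Φ u - ΦN N u| ≤ K * Real.exp (ε * ‖u‖ ^ 2) * ψ N) :
    ∃ C : ℝ, ∀ N : ℕ,
      hellinger μ0
        (fun u => (∫ u', Real.exp (-(Φ u')) ∂μ0)⁻¹ * Real.exp (-(Φ u)))
        (fun u => (∫ u', Real.exp (-(ΦN N u')) ∂μ0)⁻¹ * Real.exp (-(ΦN N u)))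
        ≤ C * ψ N := by
  obtain ⟨a, ha, hw⟩ := hFernique
  -- with `ε = a / 3` every error term below is dominated by the Fernique weight `exp (a ‖u‖²)`
  obtain ⟨M, hM⟩ := hlower (a / 3) (by positivity)
  obtain ⟨K, hK, hΦΦN⟩ := happrox (a / 3) (by positivity)
  obtain ⟨L, -, hL⟩ := hupper 1 one_pos
  set W := ∫ u, exp (a * ‖u‖ ^ 2) ∂μ0
  set S := {u : X | ‖u‖ ≤ 1 / 2}
  set b := exp (-L) * μ0.real S
  have hb : 0 < b := mul_pos (exp_pos _)
    (ENNReal.toReal_pos (hball _ (by norm_num)).ne' (measure_ne_top _ _))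
  have hS : MeasurableSet S := (isClosed_le continuous_norm continuous_const).measurableSet
  have hS1 : ∀ u ∈ S, ‖u‖ < 1 := fun u hu => lt_of_le_of_lt hu (by norm_num)
  refine ⟨√((2 / b * (K ^ 2 / 4 * exp (-M) * W)
    + (K * exp (-M) * W) ^ 2 * (exp (-M) * W) / (2 * b ^ 3)) / 2), fun N => ?_⟩
  have hΦM (u : X) : M - a / 3 * ‖u‖ ^ 2 ≤ Φ u := (hM 0 u).1
  have hΦNM (u : X) : M - a / 3 * ‖u‖ ^ 2 ≤ ΦN N u := (hM N u).2
  have hψ : 0 ≤ ψ N := nonneg_of_mul_nonneg_right ((abs_nonneg _).trans (hΦΦN N 0))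
    (mul_pos hK (exp_pos _))
  have hp := integrable_exp_neg_of_sub_mul_sq_norm_le hw (by linarith)
    hΦmeas.aestronglyMeasurable hΦM
  have hq := integrable_exp_neg_of_sub_mul_sq_norm_le hw (by linarith)
    (hΦNmeas N).aestronglyMeasurable hΦNM
  have hbp : b ≤ ∫ u, exp (-Φ u) ∂μ0 :=
    exp_neg_mul_measureReal_le_integral hp hS fun u hu => (hL 0 u (hS1 u hu)).1
  have hbq : b ≤ ∫ u, exp (-ΦN N u) ∂μ0 :=
    exp_neg_mul_measureReal_le_integral hq hS fun u hu => (hL N u (hS1 u hu)).2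
  have hZ := abs_le.mp <| abs_integral_exp_neg_sub_integral_exp_neg_le hw (by linarith) hp hq
    hΦM hΦNM (hΦΦN N)
  apply hellinger_le_of_integral_le hψ
  calc _ ≤ _ := integral_sq_sqrt_normalized_sub_le hp hq (fun _ => (exp_pos _).le)
        (fun _ => (exp_pos _).le) hb hbp hbq
    _ ≤ 2 / b * (K ^ 2 / 4 * exp (-M) * ψ N ^ 2 * W)
        + (K * exp (-M) * ψ N * W) ^ 2 * (exp (-M) * W) / (2 * b ^ 3) := by
      gcongr 2 / b * ?_ + ?_ * ?_ / _
      · exact integral_sq_sqrt_exp_neg_sub_sqrt_exp_neg_le hw (by linarith) hΦM hΦNM (hΦΦN N)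
      · exact sq_le_sq' hZ.1 hZ.2
      · exact integral_exp_neg_le_of_sub_mul_sq_norm_le hw (by linarith) hΦNM
    _ = _ := by ring

theorem stmt1
    {X : Type*} [NormedAddCommGroup X] [NormedSpace ℝ X] [CompleteSpace X]
    [MeasurableSpace X] [BorelSpace X]
    (μ0 : Measure X) [IsProbabilityMeasure μ0]
    -- μ0 is a mean-zero Gaussian measure with μ0(X) = 1:
    (hFernique : ∃ a : ℝ, 0 < a ∧ Integrable (fun u => Real.exp (a * ‖u‖ ^ 2)) μ0)
    (hball : ∀ r : ℝ, 0 < r → 0 < μ0 {u : X | ‖u‖ ≤ r})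
    (Φ : X → ℝ) (ΦN : ℕ → X → ℝ)
    (hΦmeas : Measurable Φ) (hΦNmeas : ∀ N, Measurable (ΦN N))
    -- Assumption 2.1(i), with constants uniform in N
    (hlower : ∀ ε : ℝ, 0 < ε → ∃ M : ℝ, ∀ (N : ℕ) (u : X),
      M - ε * ‖u‖ ^ 2 ≤ Φ u ∧ M - ε * ‖u‖ ^ 2 ≤ ΦN N u)
    -- Assumption 2.1(ii), with constants uniform in N
    (hupper : ∀ r : ℝ, 0 < r → ∃ L : ℝ, 0 < L ∧ ∀ (N : ℕ) (u : X),
      ‖u‖ < r → Φ u ≤ L ∧ ΦN N u ≤ L)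
    (ψ : ℕ → ℝ) (hψ : Tendsto ψ atTop (𝓝 0))
    -- forward approximation estimate
    (happrox : ∀ ε : ℝ, 0 < ε → ∃ K : ℝ, 0 < K ∧ ∀ (N : ℕ) (u : X),
      |Φ u - ΦN N u| ≤ K * Real.exp (ε * ‖u‖ ^ 2) * ψ N) :
    ∃ C : ℝ, ∀ N : ℕ,
      hellinger μ0
        (fun u => (∫ u', Real.exp (-(Φ u')) ∂μ0)⁻¹ * Real.exp (-(Φ u)))
        (fun u => (∫ u', Real.exp (-(ΦN N u')) ∂μ0)⁻¹ * Real.exp (-(ΦN N u)))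
        ≤ C * ψ N :=
  stmt1_general μ0 hFernique hball Φ ΦN hΦmeas hΦNmeas hlower hupper ψ happrox
end

section
/- Let μ0 be a mean-zero Gaussian measure with μ0(X) = 1 for a Banach space X, let Γ be a positive definite m×m covariance matrix, let Φ(u; y) = (1/2)|Γ^{-1/2}(y − G(u))|² and Φ^N(u; y) = (1/2)|Γ^{-1/2}(y − G^N(u))|² for maps G, G^N : X → R^m. Assume G and G^N satisfy, uniformly in N: for every ε > 0 there is M = M(ε) ∈ R with |Γ^{-1/2} G(u)| ≤ exp(ε‖u‖_X² + M) and |Γ^{-1/2} G^N(u)| ≤ exp(ε‖u‖_X² + M) for all u ∈ X. Assume also that for any ε > 0 there is K'(ε) > 0 such that |G(u) − G^N(u)| ≤ K' exp(ε‖u‖_X²) ψ(N) for all u ∈ X, with ψ(N) → 0 as N → ∞. Then the posterior measures μ and μ^N, defined by dμ/dμ0 ∝ exp(−Φ(u; y)) and dμ^N/dμ0 ∝ exp(−Φ^N(u; y)), satisfy d_Hell(μ, μ^N) ≤ C ψ(N) for a constant C independent of N. -/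
/-!
STATEMENT 2 (Corollary 2.3 of the paper, `c:wp2`).

If the forward maps `G, G^N : X → ℝ^m` satisfy the exponential bound of
Assumption 2.2 uniformly in `N`, and `|G(u) − G^N(u)| ≤ K' exp(ε‖u‖²) ψ(N)`,
then the posterior measures `dμ/dμ0 ∝ exp(−½|y − G(u)|_Γ²)` and
`dμ^N/dμ0 ∝ exp(−½|y − G^N(u)|_Γ²)` satisfy `d_Hell(μ, μ^N) ≤ C ψ(N)`.
-/

open MeasureTheory Real Filter Topology

/-- Euclidean norm on `ℝ^m`. -/
noncomputable def eucNorm {m : ℕ} (v : Fin m → ℝ) : ℝ :=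
  Real.sqrt (∑ i, v i ^ 2)

/-- The covariance-weighted norm `|v|_Γ = |Γ^{-1/2} v|`, expressed through a fixed
square root `Γih` of `Γ⁻¹`. -/
noncomputable def wnorm {m : ℕ} (Γih : Matrix (Fin m) (Fin m) ℝ) (v : Fin m → ℝ) : ℝ :=
  eucNorm (Γih.mulVec v)

/-! Write `Z, Z_N` for the normalising constants. Both misfits are bounded on the unit ball, which
has positive prior mass, so `Z, Z_N ≥ δ > 0` uniformly in `N`. The Hellinger integrand splits as
`Z^{-1/2} (e^{-Φ/2} - e^{-Φ^N/2}) + (Z^{-1/2} - Z_N^{-1/2}) e^{-Φ^N/2}`; since `exp (-·)` is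
`1`-Lipschitz on `[0, ∞)`, the squared Hellinger distance is controlled by `∫ |Φ - Φ^N|²` and
`(∫ |Φ - Φ^N|)²`. The growth and approximation hypotheses give `|Φ - Φ^N| ≤ ψ(N) B` with
`B(u) ∝ exp (a ‖u‖² / 4)`, which is square integrable by Fernique's theorem. -/

open scoped Matrix

section WeightedNorm

variable {m : ℕ} (A : Matrix (Fin m) (Fin m) ℝ)

lemma eucNorm_eq_norm (v : Fin m → ℝ) : eucNorm v = ‖WithLp.toLp 2 v‖ := by
  simp [eucNorm, EuclideanSpace.norm_eq]

lemma wnorm_eq_norm (v : Fin m → ℝ) : wnorm A v = ‖WithLp.toLp 2 (A *ᵥ v)‖ :=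
  eucNorm_eq_norm _

lemma wnorm_nonneg (v : Fin m → ℝ) : 0 ≤ wnorm A v :=
  sqrt_nonneg _

lemma wnorm_sub_le (v w : Fin m → ℝ) : wnorm A (v - w) ≤ wnorm A v + wnorm A w := by
  simpa [wnorm_eq_norm, Matrix.mulVec_sub] using
    norm_sub_le (WithLp.toLp 2 (A *ᵥ v)) (WithLp.toLp 2 (A *ᵥ w))

lemma abs_wnorm_sub_wnorm_le (v w : Fin m → ℝ) :
    |wnorm A v - wnorm A w| ≤ wnorm A (v - w) := by
  simpa [wnorm_eq_norm, Matrix.mulVec_sub] using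
    abs_norm_sub_norm_le (WithLp.toLp 2 (A *ᵥ v)) (WithLp.toLp 2 (A *ᵥ w))

@[fun_prop]
lemma continuous_wnorm : Continuous (wnorm A) := by
  simp only [funext (wnorm_eq_norm A)]
  fun_prop

open scoped Matrix.Norms.L2Operator in
lemma exists_wnorm_le_mul_eucNorm : ∃ C, 0 ≤ C ∧ ∀ v, wnorm A v ≤ C * eucNorm v :=
  ⟨‖A‖, norm_nonneg A, fun v => by
    simpa [wnorm_eq_norm, eucNorm_eq_norm] using A.l2_opNorm_mulVec (WithLp.toLp 2 v)⟩

/-- The paper's `Φ(u; y)`, evaluated at the model output `g = G(u)`. -/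
noncomputable def misfit (y g : Fin m → ℝ) : ℝ :=
  1 / 2 * wnorm A (y - g) ^ 2

variable {A} (y : Fin m → ℝ) {g h : Fin m → ℝ} {R : ℝ}

lemma misfit_nonneg : 0 ≤ misfit A y g := by
  unfold misfit; positivity

@[fun_prop]
lemma continuous_misfit : Continuous (misfit A y) := by
  unfold misfit; fun_prop

lemma misfit_le (hg : wnorm A g ≤ R) : misfit A y g ≤ 1 / 2 * (wnorm A y + R) ^ 2 := by
  unfold misfit
  gcongr
  · exact wnorm_nonneg A _
  · exact (wnorm_sub_le A y g).trans (by linarith)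

lemma abs_misfit_sub_misfit_le (hg : wnorm A g ≤ R) (hh : wnorm A h ≤ R) :
    |misfit A y g - misfit A y h| ≤ (wnorm A y + R) * wnorm A (g - h) := by
  have hsum : wnorm A (y - g) + wnorm A (y - h) ≤ 2 * (wnorm A y + R) := by
    linarith [wnorm_sub_le A y g, wnorm_sub_le A y h]
  have hdiff : |wnorm A (y - g) - wnorm A (y - h)| ≤ wnorm A (g - h) := by
    rw [abs_sub_comm]
    simpa using abs_wnorm_sub_wnorm_le A (y - h) (y - g)
  have hyR : 0 ≤ 2 * (wnorm A y + R) :=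
    (add_nonneg (wnorm_nonneg A _) (wnorm_nonneg A _)).trans hsum
  rw [misfit, misfit, ← mul_sub, sq_sub_sq, abs_mul, abs_mul,
    abs_of_nonneg (by positivity : (0:ℝ) ≤ 1 / 2),
    abs_of_nonneg (add_nonneg (wnorm_nonneg A _) (wnorm_nonneg A _))]
  linarith [mul_le_mul hsum hdiff (abs_nonneg _) hyR]

lemma abs_misfit_sub_misfit_le_of_exp_bound {ε M K c x : ℝ} (hεx : 0 ≤ ε * x)
    (hg : wnorm A g ≤ exp (ε * x + M)) (hh : wnorm A h ≤ exp (ε * x + M))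
    (hgh : wnorm A (g - h) ≤ c * (K * exp (ε * x))) :
    |misfit A y g - misfit A y h| ≤ c * (K * (wnorm A y + exp M) * exp (2 * ε * x)) := by
  have hy := wnorm_nonneg A y
  have hE : 1 ≤ exp (ε * x) := one_le_exp hεx
  refine (abs_misfit_sub_misfit_le y hg hh).trans ?_
  calc (wnorm A y + exp (ε * x + M)) * wnorm A (g - h)
      ≤ (wnorm A y * exp (ε * x) + exp (ε * x) * exp M) * (c * (K * exp (ε * x))) := by
        rw [exp_add]
        exact mul_le_mul (by gcongr; exact le_mul_of_one_le_right hy hE) hgh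
          (wnorm_nonneg _ _) (by positivity)
    _ = c * (K * (wnorm A y + exp M) * exp (2 * ε * x)) := by
        rw [mul_assoc 2, two_mul, exp_add]; ring

end WeightedNorm

lemma abs_exp_neg_sub_exp_neg_le_s2 {s t : ℝ} (hs : 0 ≤ s) (ht : 0 ≤ t) :
    |exp (-s) - exp (-t)| ≤ |s - t| := by
  wlog hst : s ≤ t generalizing s t
  · rw [abs_sub_comm, abs_sub_comm s]
    exact this ht hs (le_of_not_ge hst)
  have hfactor : exp (-s) - exp (-t) = exp (-s) * (1 - exp (-(t - s))) := by
    rw [mul_sub, ← exp_add]; ring_nf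
  have hexp_le_one : exp (-s) ≤ 1 := exp_le_one_iff.2 (by linarith)
  have hgap : 1 - exp (-(t - s)) ≤ t - s := by linarith [one_sub_le_exp_neg (t - s)]
  have hgap_nonneg : 0 ≤ 1 - exp (-(t - s)) := by
    linarith [exp_le_one_iff.2 (by linarith : -(t - s) ≤ 0)]
  rw [hfactor, abs_of_nonneg (mul_nonneg (exp_nonneg _) hgap_nonneg), abs_sub_comm,
    abs_of_nonneg (by linarith)]
  nlinarith [exp_pos (-s)]

lemma sq_inv_sqrt_sub_inv_sqrt_le_s2 {δ z w : ℝ} (hδ : 0 < δ) (hz : δ ≤ z) (hw : δ ≤ w) :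
    (√z⁻¹ - √w⁻¹) ^ 2 ≤ (z - w) ^ 2 / (4 * δ ^ 3) := by
  have hz0 : 0 < z := hδ.trans_le hz
  have hw0 : 0 < w := hδ.trans_le hw
  have hsz : 0 < √z := sqrt_pos.2 hz0
  have hid : √z⁻¹ - √w⁻¹ = (w - z) / (√z * √w * (√z + √w)) := by
    rw [sqrt_inv, sqrt_inv]
    field_simp
    nlinarith [sq_sqrt hz0.le, sq_sqrt hw0.le]
  -- each factor of the denominator is at least `√δ`
  have hden : 2 * √δ ^ 3 ≤ √z * √w * (√z + √w) := by
    have h1 := sqrt_le_sqrt hz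
    have h2 := sqrt_le_sqrt hw
    have h0 := sqrt_nonneg δ
    nlinarith [mul_le_mul h1 h2 h0 hsz.le]
  have hδ3 : (2 * √δ ^ 3) ^ 2 = 4 * δ ^ 3 := by
    rw [mul_pow, ← pow_mul, mul_comm 3 2, pow_mul, sq_sqrt hδ.le]; norm_num
  rw [hid, div_pow, ← hδ3, sub_sq_comm]
  gcongr

lemma sq_sqrt_density_sub_le {δ z w s t : ℝ} (hδ : 0 < δ) (hz : δ ≤ z) (hw : δ ≤ w)
    (hs : 0 ≤ s) (ht : 0 ≤ t) :
    (√(z⁻¹ * exp (-s)) - √(w⁻¹ * exp (-t))) ^ 2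
      ≤ (s - t) ^ 2 / (2 * δ) + (z - w) ^ 2 / (2 * δ ^ 3) := by
  have hz0 : 0 < z := hδ.trans_le hz
  rw [sqrt_mul (inv_nonneg.2 hz0.le), sqrt_mul (inv_nonneg.2 (hδ.trans_le hw).le),
    ← exp_half, ← exp_half]
  set a := √z⁻¹
  set e := exp (-s / 2)
  set e' := exp (-t / 2)
  have ha : a ^ 2 ≤ δ⁻¹ := by
    rw [sq_sqrt (inv_nonneg.2 hz0.le)]; exact inv_anti₀ hδ hz
  have he : (e - e') ^ 2 ≤ (s - t) ^ 2 / 4 := by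
    have h := abs_exp_neg_sub_exp_neg_le_s2 (by positivity : 0 ≤ s / 2) (by positivity : 0 ≤ t / 2)
    rw [← neg_div, ← neg_div, ← sq_le_sq] at h
    linarith [show (s / 2 - t / 2) ^ 2 = (s - t) ^ 2 / 4 by ring]
  have he' : e' ^ 2 ≤ 1 := by
    rw [← exp_nat_mul]; exact exp_le_one_iff.2 (by push_cast; linarith)
  have hsplit : (a * e - √w⁻¹ * e') ^ 2
      ≤ 2 * (a ^ 2 * (e - e') ^ 2) + 2 * ((a - √w⁻¹) ^ 2 * e' ^ 2) := by
    nlinarith [sq_nonneg (a * (e - e') - (a - √w⁻¹) * e')]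
  have h1 : a ^ 2 * (e - e') ^ 2 ≤ δ⁻¹ * ((s - t) ^ 2 / 4) :=
    mul_le_mul ha he (sq_nonneg _) (by positivity)
  have h2 : (a - √w⁻¹) ^ 2 * e' ^ 2 ≤ (z - w) ^ 2 / (4 * δ ^ 3) * 1 :=
    mul_le_mul (sq_inv_sqrt_sub_inv_sqrt_le_s2 hδ hz hw) he' (sq_nonneg _) (by positivity)
  calc _ ≤ 2 * (δ⁻¹ * ((s - t) ^ 2 / 4)) + 2 * ((z - w) ^ 2 / (4 * δ ^ 3) * 1) := by linarith
    _ = _ := by field_simp; ring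

section Posterior

variable {X : Type*} [MeasurableSpace X] {μ : Measure X} {Φ Φ' : X → ℝ}

lemma integrable_exp_neg_of_nonneg [IsFiniteMeasure μ] (hΦ : Measurable Φ)
    (hΦ0 : ∀ u, 0 ≤ Φ u) : Integrable (fun u => exp (-Φ u)) μ :=
  (integrable_const 1).mono' (measurable_exp.comp hΦ.neg).aestronglyMeasurable
    (ae_of_all _ fun u => by
      rw [norm_of_nonneg (exp_nonneg _)]; exact exp_le_one_iff.2 (neg_nonpos.2 (hΦ0 u)))

lemma exp_neg_mul_measureReal_le_integral_exp_neg [IsFiniteMeasure μ] {S : Set X} {b : ℝ}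
    (hS : MeasurableSet S) (hΦS : ∀ u ∈ S, Φ u ≤ b) (hint : Integrable (fun u => exp (-Φ u)) μ) :
    exp (-b) * μ.real S ≤ ∫ u, exp (-Φ u) ∂μ :=
  calc exp (-b) * μ.real S = ∫ u in S, exp (-b) ∂μ := by
        rw [setIntegral_const, smul_eq_mul, mul_comm]
    _ ≤ ∫ u in S, exp (-Φ u) ∂μ :=
        setIntegral_mono_on (integrableOn_const (measure_ne_top μ S)) hint.integrableOn hS
          fun u hu => exp_le_exp.2 (neg_le_neg (hΦS u hu))
    _ ≤ ∫ u, exp (-Φ u) ∂μ := setIntegral_le_integral hint (ae_of_all _ fun _ => exp_nonneg _)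

lemma exp_neg_mul_measureReal_le_integral_exp_neg_misfit [IsFiniteMeasure μ] {m : ℕ}
    {A : Matrix (Fin m) (Fin m) ℝ} (y : Fin m → ℝ) {G : X → Fin m → ℝ} (hG : Measurable G)
    {S : Set X} {R : ℝ} (hS : MeasurableSet S) (hGS : ∀ u ∈ S, wnorm A (G u) ≤ R) :
    exp (-(1 / 2 * (wnorm A y + R) ^ 2)) * μ.real S ≤ ∫ u, exp (-misfit A y (G u)) ∂μ :=
  exp_neg_mul_measureReal_le_integral_exp_neg hS (fun u hu => misfit_le y (hGS u hu))
    (integrable_exp_neg_of_nonneg (by fun_prop) fun _ => misfit_nonneg y)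

lemma abs_integral_exp_neg_sub_le [IsFiniteMeasure μ] {B : X → ℝ} (hΦ : Measurable Φ)
    (hΦ' : Measurable Φ') (hΦ0 : ∀ u, 0 ≤ Φ u) (hΦ'0 : ∀ u, 0 ≤ Φ' u) (hB : Integrable B μ)
    (hΦB : ∀ u, |Φ u - Φ' u| ≤ B u) :
    |∫ u, exp (-Φ u) ∂μ - ∫ u, exp (-Φ' u) ∂μ| ≤ ∫ u, B u ∂μ := by
  rw [← integral_sub (integrable_exp_neg_of_nonneg hΦ hΦ0)
    (integrable_exp_neg_of_nonneg hΦ' hΦ'0), ← norm_eq_abs]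
  refine (norm_integral_le_integral_norm _).trans
    (integral_mono_of_nonneg (ae_of_all _ fun _ => norm_nonneg _) hB (ae_of_all _ fun u => ?_))
  exact (abs_exp_neg_sub_exp_neg_le_s2 (hΦ0 u) (hΦ'0 u)).trans (hΦB u)

theorem hellinger_le_of_abs_potential_sub_le [IsProbabilityMeasure μ] {B : X → ℝ} {δ c : ℝ}
    (hΦ : Measurable Φ) (hΦ' : Measurable Φ') (hΦ0 : ∀ u, 0 ≤ Φ u) (hΦ'0 : ∀ u, 0 ≤ Φ' u)
    (hδ : 0 < δ) (hZ : δ ≤ ∫ u, exp (-Φ u) ∂μ) (hZ' : δ ≤ ∫ u, exp (-Φ' u) ∂μ)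
    (hB : MemLp B 2 μ) (hc : 0 ≤ c) (hΦB : ∀ u, |Φ u - Φ' u| ≤ c * B u) :
    hellinger μ (fun u => (∫ u', exp (-Φ u') ∂μ)⁻¹ * exp (-Φ u))
        (fun u => (∫ u', exp (-Φ' u') ∂μ)⁻¹ * exp (-Φ' u))
      ≤ √((∫ u, B u ^ 2 ∂μ) / (4 * δ) + (∫ u, B u ∂μ) ^ 2 / (4 * δ ^ 3)) * c := by
  set Z := ∫ u, exp (-Φ u) ∂μ
  set Z' := ∫ u, exp (-Φ' u) ∂μ
  have hB1 : Integrable B μ := hB.integrable one_le_two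
  have hB2 : Integrable (fun u => B u ^ 2) μ := hB.integrable_sq
  have hZZ' : (Z - Z') ^ 2 ≤ (c * ∫ u, B u ∂μ) ^ 2 := by
    rw [← sq_abs, ← integral_const_mul]
    refine pow_le_pow_left₀ (abs_nonneg _)
      (abs_integral_exp_neg_sub_le hΦ hΦ' hΦ0 hΦ'0 (hB1.const_mul c) hΦB) 2
  have hpoint : ∀ u, (√(Z⁻¹ * exp (-Φ u)) - √(Z'⁻¹ * exp (-Φ' u))) ^ 2
      ≤ c ^ 2 / (2 * δ) * B u ^ 2 + (c * ∫ u, B u ∂μ) ^ 2 / (2 * δ ^ 3) := fun u => by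
    refine (sq_sqrt_density_sub_le hδ hZ hZ' (hΦ0 u) (hΦ'0 u)).trans ?_
    have hΦΦ' : (Φ u - Φ' u) ^ 2 ≤ (c * B u) ^ 2 := by
      rw [← sq_abs]; exact pow_le_pow_left₀ (abs_nonneg _) (hΦB u) 2
    have := div_le_div_of_nonneg_right hΦΦ' (by positivity : (0:ℝ) ≤ 2 * δ)
    have := div_le_div_of_nonneg_right hZZ' (by positivity : (0:ℝ) ≤ 2 * δ ^ 3)
    rw [mul_pow] at *
    linarith [show c ^ 2 * B u ^ 2 / (2 * δ) = c ^ 2 / (2 * δ) * B u ^ 2 by ring]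
  have hint : ∫ u, (√(Z⁻¹ * exp (-Φ u)) - √(Z'⁻¹ * exp (-Φ' u))) ^ 2 ∂μ
      ≤ c ^ 2 / (2 * δ) * ∫ u, B u ^ 2 ∂μ + (c * ∫ u, B u ∂μ) ^ 2 / (2 * δ ^ 3) := by
    refine (integral_mono_of_nonneg (ae_of_all _ fun _ => sq_nonneg _)
      ((hB2.const_mul _).add (integrable_const _)) (ae_of_all _ hpoint)).trans_eq ?_
    simp only [Pi.add_apply]
    rw [integral_add (hB2.const_mul _) (integrable_const _), integral_const_mul,
      integral_const, probReal_univ, one_smul]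
  calc hellinger μ _ _ ≤ √((1 / 2) * (c ^ 2 / (2 * δ) * ∫ u, B u ^ 2 ∂μ
        + (c * ∫ u, B u ∂μ) ^ 2 / (2 * δ ^ 3))) := sqrt_le_sqrt (by linarith)
    _ = √(((∫ u, B u ^ 2 ∂μ) / (4 * δ) + (∫ u, B u ∂μ) ^ 2 / (4 * δ ^ 3)) * c ^ 2) := by
      congr 1; ring
    _ = _ := by rw [sqrt_mul' _ (sq_nonneg c), sqrt_sq hc]

end Posterior

lemma memLp_two_exp_mul_norm_sq {E : Type*} [NormedAddCommGroup E] [MeasurableSpace E]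
    [OpensMeasurableSpace E] {μ : Measure E} {a b : ℝ}
    (ha : Integrable (fun u => exp (a * ‖u‖ ^ 2)) μ) (hab : 2 * b ≤ a) :
    MemLp (fun u => exp (b * ‖u‖ ^ 2)) 2 μ := by
  refine (memLp_two_iff_integrable_sq (by fun_prop)).2 (ha.mono' (by fun_prop)
    (ae_of_all _ fun u => ?_))
  rw [norm_of_nonneg (by positivity), ← exp_nat_mul]
  exact exp_le_exp.2 (by push_cast; nlinarith [sq_nonneg ‖u‖])

theorem stmt2_general
    {X : Type*} [NormedAddCommGroup X]
    [MeasurableSpace X] [BorelSpace X]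
    (μ0 : Measure X) [IsProbabilityMeasure μ0]
    -- μ0 is a mean-zero Gaussian measure with μ0(X) = 1:
    (hFernique : ∃ a : ℝ, 0 < a ∧ Integrable (fun u => Real.exp (a * ‖u‖ ^ 2)) μ0)
    (hball : ∀ r : ℝ, 0 < r → 0 < μ0 {u : X | ‖u‖ ≤ r})
    {m : ℕ} (Γih : Matrix (Fin m) (Fin m) ℝ)
    (y : Fin m → ℝ)
    (G : X → (Fin m → ℝ)) (GN : ℕ → X → (Fin m → ℝ))
    (hGmeas : Measurable G) (hGNmeas : ∀ N, Measurable (GN N))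
    -- exponential bounds on G and G^N, uniform in N
    (hG : ∀ ε : ℝ, 0 < ε → ∃ M : ℝ, ∀ (N : ℕ) (u : X),
      wnorm Γih (G u) ≤ Real.exp (ε * ‖u‖ ^ 2 + M) ∧
      wnorm Γih (GN N u) ≤ Real.exp (ε * ‖u‖ ^ 2 + M))
    (ψ : ℕ → ℝ)
    -- forward approximation estimate
    (happrox : ∀ ε : ℝ, 0 < ε → ∃ K' : ℝ, 0 < K' ∧ ∀ (N : ℕ) (u : X),
      eucNorm (G u - GN N u) ≤ K' * Real.exp (ε * ‖u‖ ^ 2) * ψ N)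
    (Φ : X → ℝ) (ΦN : ℕ → X → ℝ)
    (hΦ : ∀ u, Φ u = (1 / 2) * (wnorm Γih (y - G u)) ^ 2)
    (hΦN : ∀ N u, ΦN N u = (1 / 2) * (wnorm Γih (y - GN N u)) ^ 2) :
    ∃ C : ℝ, ∀ N : ℕ,
      hellinger μ0
        (fun u => (∫ u', Real.exp (-(Φ u')) ∂μ0)⁻¹ * Real.exp (-(Φ u)))
        (fun u => (∫ u', Real.exp (-(ΦN N u')) ∂μ0)⁻¹ * Real.exp (-(ΦN N u)))
        ≤ C * ψ N := by
  obtain rfl : Φ = fun u => misfit Γih y (G u) := funext hΦ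
  obtain rfl : ΦN = fun N u => misfit Γih y (GN N u) := funext fun N => funext (hΦN N)
  obtain ⟨a, ha, hFer⟩ := hFernique
  obtain ⟨M, hM⟩ := hG (a / 8) (by positivity)
  obtain ⟨K', hK', hK'approx⟩ := happrox (a / 8) (by positivity)
  obtain ⟨L, hL, hwL⟩ := exists_wnorm_le_mul_eucNorm Γih
  have hψ0 : ∀ N, 0 ≤ ψ N := fun N =>
    nonneg_of_mul_nonneg_right ((sqrt_nonneg _).trans (hK'approx N 0)) (by positivity)
  -- Both misfits are `≤ b` on the unit ball `S`, which has positive prior mass.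
  set b := 1 / 2 * (wnorm Γih y + exp (a / 8 + M)) ^ 2
  set S := {u : X | ‖u‖ ≤ 1}
  have hS : MeasurableSet S := measurableSet_le (by fun_prop) (by fun_prop)
  have hδ : 0 < exp (-b) * μ0.real S :=
    mul_pos (exp_pos _) (ENNReal.toReal_pos (hball 1 one_pos).ne' (measure_ne_top _ _))
  have hbS : ∀ u ∈ S, exp (a / 8 * ‖u‖ ^ 2 + M) ≤ exp (a / 8 + M) := fun u hu => by
    have : ‖u‖ ^ 2 ≤ 1 := pow_le_one₀ (norm_nonneg u) hu
    gcongr; nlinarith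
  have hZ := exp_neg_mul_measureReal_le_integral_exp_neg_misfit (μ := μ0) y hGmeas hS
    fun u hu => (hM 0 u).1.trans (hbS u hu)
  have hZN := fun N => exp_neg_mul_measureReal_le_integral_exp_neg_misfit (μ := μ0) y
    (hGNmeas N) hS fun u hu => (hM N u).2.trans (hbS u hu)
  have hB : MemLp (fun u => L * K' * (wnorm Γih y + exp M) * exp (2 * (a / 8) * ‖u‖ ^ 2))
      2 μ0 :=
    (memLp_two_exp_mul_norm_sq hFer (by linarith)).const_mul _
  have hΦB : ∀ N u, |misfit Γih y (G u) - misfit Γih y (GN N u)|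
      ≤ ψ N * (L * K' * (wnorm Γih y + exp M) * exp (2 * (a / 8) * ‖u‖ ^ 2)) := fun N u =>
    abs_misfit_sub_misfit_le_of_exp_bound y (by positivity) (hM N u).1 (hM N u).2
      ((hwL _).trans ((mul_le_mul_of_nonneg_left (hK'approx N u) hL).trans_eq (by ring)))
  exact ⟨_, fun N => hellinger_le_of_abs_potential_sub_le (by fun_prop) (by fun_prop)
    (fun u => misfit_nonneg y) (fun u => misfit_nonneg y) hδ hZ (hZN N) hB (hψ0 N) (hΦB N)⟩

theorem stmt2
    {X : Type*} [NormedAddCommGroup X] [NormedSpace ℝ X] [CompleteSpace X]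
    [MeasurableSpace X] [BorelSpace X]
    (μ0 : Measure X) [IsProbabilityMeasure μ0]
    -- μ0 is a mean-zero Gaussian measure with μ0(X) = 1:
    (hFernique : ∃ a : ℝ, 0 < a ∧ Integrable (fun u => Real.exp (a * ‖u‖ ^ 2)) μ0)
    (hball : ∀ r : ℝ, 0 < r → 0 < μ0 {u : X | ‖u‖ ≤ r})
    {m : ℕ} (Γ Γih : Matrix (Fin m) (Fin m) ℝ)
    (hΓ : Γ.PosDef) (hΓih : Γih * Γih = Γ⁻¹)
    (y : Fin m → ℝ)
    (G : X → (Fin m → ℝ)) (GN : ℕ → X → (Fin m → ℝ))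
    (hGmeas : Measurable G) (hGNmeas : ∀ N, Measurable (GN N))
    -- exponential bounds on G and G^N, uniform in N
    (hG : ∀ ε : ℝ, 0 < ε → ∃ M : ℝ, ∀ (N : ℕ) (u : X),
      wnorm Γih (G u) ≤ Real.exp (ε * ‖u‖ ^ 2 + M) ∧
      wnorm Γih (GN N u) ≤ Real.exp (ε * ‖u‖ ^ 2 + M))
    (ψ : ℕ → ℝ) (hψ : Tendsto ψ atTop (𝓝 0))
    -- forward approximation estimate
    (happrox : ∀ ε : ℝ, 0 < ε → ∃ K' : ℝ, 0 < K' ∧ ∀ (N : ℕ) (u : X),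
      eucNorm (G u - GN N u) ≤ K' * Real.exp (ε * ‖u‖ ^ 2) * ψ N)
    (Φ : X → ℝ) (ΦN : ℕ → X → ℝ)
    (hΦ : ∀ u, Φ u = (1 / 2) * (wnorm Γih (y - G u)) ^ 2)
    (hΦN : ∀ N u, ΦN N u = (1 / 2) * (wnorm Γih (y - GN N u)) ^ 2) :
    ∃ C : ℝ, ∀ N : ℕ,
      hellinger μ0
        (fun u => (∫ u', Real.exp (-(Φ u')) ∂μ0)⁻¹ * Real.exp (-(Φ u)))
        (fun u => (∫ u', Real.exp (-(ΦN N u')) ∂μ0)⁻¹ * Real.exp (-(ΦN N u)))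
        ≤ C * ψ N :=
  stmt2_general μ0 hFernique hball Γih y G GN hGmeas hGNmeas hG ψ happrox Φ ΦN hΦ hΦN
end

section
/- Let μ0 be a mean-zero Gaussian measure with μ0(X) = 1 for a Banach space X. Suppose Φ and Φ^N satisfy: for every ε > 0 there is M = M(ε) ∈ R such that Φ(u) ≥ M − ε‖u‖_X² and Φ^N(u) ≥ M − ε‖u‖_X² for all u ∈ X (uniformly in N); and that for any ε > 0 there is K = K(ε) > 0 with |Φ(u) − Φ^N(u)| ≤ K exp(ε‖u‖_X²) ψ(N) for all u ∈ X. Then the normalization constants Z = ∫_X exp(−Φ(u)) dμ0(u) and Z^N = ∫_X exp(−Φ^N(u)) dμ0(u) satisfy |Z − Z^N| ≤ C ψ(N) for a constant C independent of N. -/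
/-!
STATEMENT 4 (closeness of the normalization constants `Z` and `Z^N`).

Under the uniform lower bound (Assumption 2.1(i)) and the forward approximation
estimate `|Φ(u) − Φ^N(u)| ≤ K exp(ε‖u‖²) ψ(N)`, the normalization constants
satisfy `|Z − Z^N| ≤ C ψ(N)` with `C` independent of `N`.  Gaussianity of `μ0`
is encoded by the conclusion of the Fernique theorem.
-/

open MeasureTheory Real Filter Topology

lemma abs_exp_sub_exp_le' (x y : ℝ) :
    |Real.exp x - Real.exp y| ≤ Real.exp (max x y) * |x - y| := by
  wlog h : y ≤ x generalizing x y
  · rw [abs_sub_comm, abs_sub_comm x y, max_comm]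
    exact this y x (le_of_not_ge h)
  rw [abs_of_nonneg (sub_nonneg.2 (Real.exp_le_exp.2 h)), max_eq_left h,
    abs_of_nonneg (sub_nonneg.2 h)]
  have h1 : Real.exp x * (y - x + 1) ≤ Real.exp x * Real.exp (y - x) :=
    mul_le_mul_of_nonneg_left (Real.add_one_le_exp (y - x)) (Real.exp_pos x).le
  rw [← Real.exp_add] at h1
  simp only [add_sub_cancel] at h1
  nlinarith [Real.exp_pos x]

theorem stmt4
    {X : Type*} [NormedAddCommGroup X] [NormedSpace ℝ X] [CompleteSpace X]
    [MeasurableSpace X] [BorelSpace X]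
    (μ0 : Measure X) [IsProbabilityMeasure μ0]
    -- μ0 is a mean-zero Gaussian measure with μ0(X) = 1:
    (hFernique : ∃ a : ℝ, 0 < a ∧ Integrable (fun u => Real.exp (a * ‖u‖ ^ 2)) μ0)
    (Φ : X → ℝ) (ΦN : ℕ → X → ℝ)
    (hΦmeas : Measurable Φ) (hΦNmeas : ∀ N, Measurable (ΦN N))
    -- Assumption 2.1(i), with constants uniform in N
    (hlower : ∀ ε : ℝ, 0 < ε → ∃ M : ℝ, ∀ (N : ℕ) (u : X),
      M - ε * ‖u‖ ^ 2 ≤ Φ u ∧ M - ε * ‖u‖ ^ 2 ≤ ΦN N u)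
    (ψ : ℕ → ℝ)
    -- forward approximation estimate
    (happrox : ∀ ε : ℝ, 0 < ε → ∃ K : ℝ, 0 < K ∧ ∀ (N : ℕ) (u : X),
      |Φ u - ΦN N u| ≤ K * Real.exp (ε * ‖u‖ ^ 2) * ψ N) :
    ∃ C : ℝ, ∀ N : ℕ,
      |(∫ u, Real.exp (-(Φ u)) ∂μ0) - ∫ u, Real.exp (-(ΦN N u)) ∂μ0| ≤ C * ψ N := by
  obtain ⟨a, ha, hInt⟩ := hFernique
  have hε : (0:ℝ) < a / 4 := by linarith
  obtain ⟨M, hM⟩ := hlower (a / 4) hε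
  obtain ⟨K, hK, hKb⟩ := happrox (a / 4) hε
  -- ψ is nonnegative
  have hψ : ∀ N, 0 ≤ ψ N := by
    intro N
    have h0 := hKb N 0
    have h1 : (0:ℝ) ≤ K * Real.exp (a / 4 * ‖(0:X)‖ ^ 2) * ψ N :=
      (abs_nonneg _).trans h0
    by_contra h
    push_neg at h
    have h2 : K * Real.exp (a / 4 * ‖(0:X)‖ ^ 2) * ψ N < 0 :=
      mul_neg_of_pos_of_neg (mul_pos hK (Real.exp_pos _)) h
    linarith
  -- integrability of the individual integrands
  have hbound : ∀ (f : X → ℝ), Measurable f →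
      (∀ u : X, M - a / 4 * ‖u‖ ^ 2 ≤ f u) →
      Integrable (fun u => Real.exp (-(f u))) μ0 := by
    intro f hf hlb
    apply Integrable.mono' (hInt.const_mul (Real.exp (-M)))
    · exact (hf.neg.exp).aestronglyMeasurable
    · filter_upwards with u
      rw [Real.norm_eq_abs, abs_of_pos (Real.exp_pos _), ← Real.exp_add]
      apply Real.exp_le_exp.2
      have := hlb u
      have hn : (0:ℝ) ≤ ‖u‖ ^ 2 := by positivity
      nlinarith
  have hintΦ : Integrable (fun u => Real.exp (-(Φ u))) μ0 :=
    hbound Φ hΦmeas fun u => (hM 0 u).1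
  have hintΦN : ∀ N, Integrable (fun u => Real.exp (-(ΦN N u))) μ0 :=
    fun N => hbound (ΦN N) (hΦNmeas N) fun u => (hM N u).2
  set I : ℝ := ∫ u, Real.exp (a * ‖u‖ ^ 2) ∂μ0 with hI
  refine ⟨K * Real.exp (-M) * I, fun N => ?_⟩
  rw [← integral_sub hintΦ (hintΦN N)]
  calc |∫ u, (Real.exp (-(Φ u)) - Real.exp (-(ΦN N u))) ∂μ0|
      ≤ ∫ u, |Real.exp (-(Φ u)) - Real.exp (-(ΦN N u))| ∂μ0 :=
        by simpa [Real.norm_eq_abs] using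
          norm_integral_le_integral_norm (μ := μ0)
            (fun u => Real.exp (-(Φ u)) - Real.exp (-(ΦN N u)))
    _ ≤ ∫ u, K * Real.exp (-M) * Real.exp (a * ‖u‖ ^ 2) * ψ N ∂μ0 := by
        apply integral_mono (hintΦ.sub (hintΦN N)).abs
        · exact (((hInt.const_mul (K * Real.exp (-M)))).mul_const (ψ N)).congr
            (by filter_upwards with u; ring)
        · intro u
          have h1 := abs_exp_sub_exp_le' (-(Φ u)) (-(ΦN N u))
          have h2 : max (-(Φ u)) (-(ΦN N u)) ≤ a / 4 * ‖u‖ ^ 2 - M := by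
            apply max_le <;> [have := (hM N u).1; have := (hM N u).2] <;> linarith
          have h3 : |-(Φ u) - -(ΦN N u)| = |Φ u - ΦN N u| := by
            rw [← abs_neg]; ring_nf
          have h4 := hKb N u
          have hn : (0:ℝ) ≤ ‖u‖ ^ 2 := by positivity
          calc |Real.exp (-(Φ u)) - Real.exp (-(ΦN N u))|
              ≤ Real.exp (max (-(Φ u)) (-(ΦN N u))) * |Φ u - ΦN N u| := by
                rw [← h3]; exact h1
            _ ≤ Real.exp (a / 4 * ‖u‖ ^ 2 - M) * (K * Real.exp (a / 4 * ‖u‖ ^ 2) * ψ N) := by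
                apply mul_le_mul (Real.exp_le_exp.2 h2) h4 (abs_nonneg _) (Real.exp_pos _).le
            _ ≤ K * Real.exp (-M) * Real.exp (a * ‖u‖ ^ 2) * ψ N := by
                have hee : Real.exp (a / 4 * ‖u‖ ^ 2 - M) * Real.exp (a / 4 * ‖u‖ ^ 2)
                    ≤ Real.exp (-M) * Real.exp (a * ‖u‖ ^ 2) := by
                  rw [← Real.exp_add, ← Real.exp_add]
                  apply Real.exp_le_exp.2; nlinarith
                calc Real.exp (a / 4 * ‖u‖ ^ 2 - M) * (K * Real.exp (a / 4 * ‖u‖ ^ 2) * ψ N)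
                    = (Real.exp (a / 4 * ‖u‖ ^ 2 - M) * Real.exp (a / 4 * ‖u‖ ^ 2)) *
                        (K * ψ N) := by ring
                  _ ≤ (Real.exp (-M) * Real.exp (a * ‖u‖ ^ 2)) * (K * ψ N) :=
                      mul_le_mul_of_nonneg_right hee (mul_nonneg hK.le (hψ N))
                  _ = K * Real.exp (-M) * Real.exp (a * ‖u‖ ^ 2) * ψ N := by ring
    _ = K * Real.exp (-M) * I * ψ N := by
        rw [hI, ← integral_const_mul, ← integral_mul_const]
end

section
/- Let μ0 be a mean-zero Gaussian measure on a separable Banach space with μ0(X) = 1 for a Banach space X, and define probability measures μ and μ^N by dμ/dμ0(u) = Z^{-1} exp(−Φ(u)) and dμ^N/dμ0(u) = (Z^N)^{-1} exp(−Φ^N(u)), with Z, Z^N the corresponding normalization constants. Assume Φ and Φ^N satisfy, with constants uniform in N: (i) for every ε > 0 there is M ∈ R such that Φ(u) ≥ M − ε‖u‖_X² for all u ∈ X (same for Φ^N); (ii) for every r > 0 there is L(r) > 0 such that Φ(u) ≤ L(r) for ‖u‖_X < r (same for Φ^N). Assume also that for any R > 0 there is K = K(R) > 0 such that |Φ(u)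 − Φ^N(u)| ≤ K ψ(N) for all u with ‖u‖_X ≤ R, where ψ(N) → 0 as N → ∞. Then d_Hell(μ, μ^N) → 0 as N → ∞. -/
/-!
Fernique's integrability of `exp (a ‖u‖²)` together with assumption (i) at `ε = a` gives one
integrable function dominating every `exp (-Φ^N)`, and the approximation estimate on balls gives
`Φ^N → Φ` pointwise. Dominated convergence yields `Z^N → Z`, where `Z > 0` because `exp (-Φ)` is
positive; so the normalized densities converge pointwise under a common integrable bound, and a
second application of dominated convergence, using `(√p - √q)² ≤ p + q`, sends the Hellinger
integral to zero.
-/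

open MeasureTheory Real Filter Topology

noncomputable def gibbsDensity {X : Type*} [MeasurableSpace X] (ν : Measure X) (Φ : X → ℝ) :
    X → ℝ :=
  fun u => (∫ u', exp (-Φ u') ∂ν)⁻¹ * exp (-Φ u)

lemma sub_sqrt_sq_le_add {a b : ℝ} (ha : 0 ≤ a) (hb : 0 ≤ b) : (√a - √b) ^ 2 ≤ a + b := by
  nlinarith [sq_sqrt ha, sq_sqrt hb, mul_nonneg (sqrt_nonneg a) (sqrt_nonneg b)]

section Dominated

variable {X ι : Type*} [MeasurableSpace X] {ν : Measure X} {l : Filter ι} [l.IsCountablyGenerated]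

theorem tendsto_hellinger_zero_of_dominated {p g : X → ℝ} {q : ι → X → ℝ}
    (hp : Measurable p) (hq : ∀ i, Measurable (q i)) (hg : Integrable g ν)
    (hp_bound : ∀ u, 0 ≤ p u ∧ p u ≤ g u) (hq_bound : ∀ᶠ i in l, ∀ u, 0 ≤ q i u ∧ q i u ≤ g u)
    (hlim : ∀ᵐ u ∂ν, Tendsto (fun i => q i u) l (𝓝 (p u))) :
    Tendsto (fun i => hellinger ν p (q i)) l (𝓝 0) := by
  have hint : Tendsto (fun i => ∫ u, (√(p u) - √(q i u)) ^ 2 ∂ν) l (𝓝 (∫ _, (0 : ℝ) ∂ν)) := by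
    refine tendsto_integral_filter_of_dominated_convergence (fun u => 2 * g u)
      (.of_forall fun i => ((hp.sqrt.sub (hq i).sqrt).pow_const 2).aestronglyMeasurable)
      ?_ (hg.const_mul 2) ?_
    · filter_upwards [hq_bound] with i hi
      refine .of_forall fun u => ?_
      rw [norm_of_nonneg (sq_nonneg _)]
      linarith [sub_sqrt_sq_le_add (hp_bound u).1 (hi u).1, (hp_bound u).2, (hi u).2]
    · filter_upwards [hlim] with u hu
      simpa using ((continuous_sqrt.tendsto _).comp hu).const_sub (√(p u)) |>.pow 2
  have h := (continuous_sqrt.tendsto _).comp (hint.const_mul (1 / 2))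
  rwa [integral_zero, mul_zero, sqrt_zero] at h

theorem tendsto_hellinger_gibbsDensity [NeZero ν] {Φ G : X → ℝ} {ΦN : ι → X → ℝ}
    (hΦ : Measurable Φ) (hΦN : ∀ i, Measurable (ΦN i)) (hG : Integrable G ν)
    (hΦ_le : ∀ u, exp (-Φ u) ≤ G u) (hΦN_le : ∀ i u, exp (-ΦN i u) ≤ G u)
    (hlim : ∀ u, Tendsto (fun i => ΦN i u) l (𝓝 (Φ u))) :
    Tendsto (fun i => hellinger ν (gibbsDensity ν Φ) (gibbsDensity ν (ΦN i))) l (𝓝 0) := by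
  set Z := ∫ u, exp (-Φ u) ∂ν
  have hexp_lim : ∀ u, Tendsto (fun i => exp (-ΦN i u)) l (𝓝 (exp (-Φ u))) := fun u =>
    (continuous_exp.tendsto _).comp (hlim u).neg
  have hZ_pos : 0 < Z :=
    integral_exp_pos (hG.mono' hΦ.neg.exp.aestronglyMeasurable
      (.of_forall fun u => by rw [norm_of_nonneg (exp_pos _).le]; exact hΦ_le u))
  have hZN : Tendsto (fun i => ∫ u, exp (-ΦN i u) ∂ν) l (𝓝 Z) :=
    tendsto_integral_filter_of_dominated_convergence G
      (.of_forall fun i => (hΦN i).neg.exp.aestronglyMeasurable)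
      (.of_forall fun i => .of_forall fun u => by
        rw [norm_of_nonneg (exp_pos _).le]; exact hΦN_le i u)
      hG (.of_forall hexp_lim)
  -- Eventually `Z^N ≥ Z / 2`, so `2 / Z * G` dominates all normalized densities.
  have hbound : ∀ {Z' : ℝ} {φ : X → ℝ}, Z / 2 ≤ Z' → (∀ u, exp (-φ u) ≤ G u) →
      ∀ u, 0 ≤ Z'⁻¹ * exp (-φ u) ∧ Z'⁻¹ * exp (-φ u) ≤ 2 / Z * G u := by
    intro Z' φ hZ' hφ u
    have hZ'_inv : Z'⁻¹ ≤ 2 / Z := by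
      rw [← inv_div]; exact inv_anti₀ (by positivity) hZ'
    have hZ' : 0 < Z' := by linarith
    exact ⟨by positivity, mul_le_mul hZ'_inv (hφ u) (exp_pos _).le (by positivity)⟩
  refine tendsto_hellinger_zero_of_dominated (g := fun u => 2 / Z * G u)
    (measurable_const.mul hΦ.neg.exp) (fun i => measurable_const.mul (hΦN i).neg.exp)
    (hG.const_mul _) (hbound (by linarith) hΦ_le) ?_
    (.of_forall fun u => (hZN.inv₀ hZ_pos.ne').mul (hexp_lim u))
  filter_upwards [hZN.eventually (le_mem_nhds (by linarith : Z / 2 < Z))] with i hi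
  exact hbound hi (hΦN_le i)

end Dominated

lemma tendsto_of_abs_sub_le_on_closedBall {X ι : Type*} [NormedAddCommGroup X] {l : Filter ι}
    {Φ : X → ℝ} {ΦN : ι → X → ℝ} {ψ : ι → ℝ} (hψ : Tendsto ψ l (𝓝 0))
    (happrox : ∀ R : ℝ, 0 < R → ∃ K : ℝ, ∀ i u, ‖u‖ ≤ R → |Φ u - ΦN i u| ≤ K * ψ i) (u : X) :
    Tendsto (fun i => ΦN i u) l (𝓝 (Φ u)) := by
  obtain ⟨K, hK⟩ := happrox (‖u‖ + 1) (by positivity)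
  rw [tendsto_iff_norm_sub_tendsto_zero]
  refine squeeze_zero (fun _ => norm_nonneg _) (fun i => ?_) (by simpa using hψ.const_mul K)
  rw [norm_eq_abs, abs_sub_comm]
  exact hK i u (by linarith)

lemma exp_neg_le_of_quadratic_lower_bound {X : Type*} [NormedAddCommGroup X] {φ : X → ℝ}
    {M a : ℝ} (hφ : ∀ u, M - a * ‖u‖ ^ 2 ≤ φ u) (u : X) :
    exp (-φ u) ≤ exp (-M) * exp (a * ‖u‖ ^ 2) := by
  rw [← exp_add]
  exact exp_le_exp.mpr (by linarith [hφ u])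

theorem stmt5_general
    {X : Type*} [NormedAddCommGroup X]
    [MeasurableSpace X]
    (μ0 : Measure X) [IsProbabilityMeasure μ0]
    -- μ0 is a mean-zero Gaussian measure with μ0(X) = 1:
    (hFernique : ∃ a : ℝ, 0 < a ∧ Integrable (fun u => Real.exp (a * ‖u‖ ^ 2)) μ0)
    (Φ : X → ℝ) (ΦN : ℕ → X → ℝ)
    (hΦmeas : Measurable Φ) (hΦNmeas : ∀ N, Measurable (ΦN N))
    -- Assumption 2.1(i), with constants uniform in N
    (hlower : ∀ ε : ℝ, 0 < ε → ∃ M : ℝ, ∀ (N : ℕ) (u : X),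
      M - ε * ‖u‖ ^ 2 ≤ Φ u ∧ M - ε * ‖u‖ ^ 2 ≤ ΦN N u)
    (ψ : ℕ → ℝ) (hψ : Tendsto ψ atTop (𝓝 0))
    -- forward approximation estimate, on balls only
    (happrox : ∀ R : ℝ, 0 < R → ∃ K : ℝ, 0 < K ∧ ∀ (N : ℕ) (u : X),
      ‖u‖ ≤ R → |Φ u - ΦN N u| ≤ K * ψ N) :
    Tendsto (fun N : ℕ =>
      hellinger μ0
        (fun u => (∫ u', Real.exp (-(Φ u')) ∂μ0)⁻¹ * Real.exp (-(Φ u)))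
        (fun u => (∫ u', Real.exp (-(ΦN N u')) ∂μ0)⁻¹ * Real.exp (-(ΦN N u))))
      atTop (𝓝 0) := by
  obtain ⟨a, ha, hFa⟩ := hFernique
  obtain ⟨M, hM⟩ := hlower a ha
  exact tendsto_hellinger_gibbsDensity hΦmeas hΦNmeas (hFa.const_mul (exp (-M)))
    (exp_neg_le_of_quadratic_lower_bound fun u => (hM 0 u).1)
    (fun N => exp_neg_le_of_quadratic_lower_bound fun u => (hM N u).2)
    (tendsto_of_abs_sub_le_on_closedBall hψ fun R hR => (happrox R hR).imp fun _ hK => hK.2)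

theorem stmt5
    {X : Type*} [NormedAddCommGroup X] [NormedSpace ℝ X] [CompleteSpace X]
    [MeasurableSpace X] [BorelSpace X]
    (μ0 : Measure X) [IsProbabilityMeasure μ0]
    -- μ0 is a mean-zero Gaussian measure with μ0(X) = 1:
    (hFernique : ∃ a : ℝ, 0 < a ∧ Integrable (fun u => Real.exp (a * ‖u‖ ^ 2)) μ0)
    (hball : ∀ r : ℝ, 0 < r → 0 < μ0 {u : X | ‖u‖ ≤ r})
    (Φ : X → ℝ) (ΦN : ℕ → X → ℝ)
    (hΦmeas : Measurable Φ) (hΦNmeas : ∀ N, Measurable (ΦN N))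
    -- Assumption 2.1(i), with constants uniform in N
    (hlower : ∀ ε : ℝ, 0 < ε → ∃ M : ℝ, ∀ (N : ℕ) (u : X),
      M - ε * ‖u‖ ^ 2 ≤ Φ u ∧ M - ε * ‖u‖ ^ 2 ≤ ΦN N u)
    -- Assumption 2.1(ii), with constants uniform in N
    (hupper : ∀ r : ℝ, 0 < r → ∃ L : ℝ, 0 < L ∧ ∀ (N : ℕ) (u : X),
      ‖u‖ < r → Φ u ≤ L ∧ ΦN N u ≤ L)
    (ψ : ℕ → ℝ) (hψ : Tendsto ψ atTop (𝓝 0))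
    -- forward approximation estimate, on balls only
    (happrox : ∀ R : ℝ, 0 < R → ∃ K : ℝ, 0 < K ∧ ∀ (N : ℕ) (u : X),
      ‖u‖ ≤ R → |Φ u - ΦN N u| ≤ K * ψ N) :
    Tendsto (fun N : ℕ =>
      hellinger μ0
        (fun u => (∫ u', Real.exp (-(Φ u')) ∂μ0)⁻¹ * Real.exp (-(Φ u)))
        (fun u => (∫ u', Real.exp (-(ΦN N u')) ∂μ0)⁻¹ * Real.exp (-(ΦN N u))))
      atTop (𝓝 0) :=
  stmt5_general μ0 hFernique Φ ΦN hΦmeas hΦNmeas hlower ψ hψ happrox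
end
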